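/- For n ≥ 1, let G be the caterpillar gadget with degree-5 vertices p_1, p_2, …, p_n, and let O be the unique F-compatible orientation of G containing the arc (r, p_n). Then O is strongly TC-compatible, and for each 1 ≤ i ≤ n, (p_i, x_i) is an arc of O. -/
import Mathlib


/-!
Common definitions: rooted (pseudo/phylogenetic) networks represented as arc
relations `D : V → V → Prop` on a vertex type `V`, with in/out-degrees measured
by `Set.ncard`, together with the orientation notions (Variant A, Variant B,
orientations of connector networks) from the paper.
-/

section Prelude

universe u
variable {V : Type u}

/-- In-degree of `v` in the digraph with arc relation `D`. -/
noncomputable def inDeg (D : V → V → Prop) (v : V) : ℕ := Set.ncard {u | D u v}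

/-- Out-degree of `v` in the digraph with arc relation `D`. -/
noncomputable def outDeg (D : V → V → Prop) (v : V) : ℕ := Set.ncard {u | D v u}

/-- A digraph is acyclic if it has no directed cycle. -/
def Acyclic (D : V → V → Prop) : Prop := ∀ v, ¬ Relation.TransGen D v v

/-- A tree vertex: in-degree 1 and out-degree at least 1. -/
def IsTreeVertex (D : V → V → Prop) (v : V) : Prop := inDeg D v = 1 ∧ 1 ≤ outDeg D v

/-- A leaf (sink) of a digraph. -/
def IsLeafVertex (D : V → V → Prop) (v : V) : Prop := outDeg D v = 0

/-- Tree-child: every non-leaf vertex has a child that is a tree vertex or a leaf. -/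
def TreeChild (D : V → V → Prop) : Prop :=
  ∀ v, ¬ IsLeafVertex D v → ∃ u, D v u ∧ (IsTreeVertex D u ∨ IsLeafVertex D u)

/-- Funneled: every reticulation (in-degree at least 2) has out-degree 1. -/
def Funneled (D : V → V → Prop) : Prop := ∀ v, 2 ≤ inDeg D v → outDeg D v = 1

/-- An arc `(a,b)` is a shortcut if there is another directed path from `a` to `b`. -/
def IsShortcut (D : V → V → Prop) (a b : V) : Prop :=
  D a b ∧ ∃ c, D a c ∧ Relation.TransGen D c b

/-- Normal: tree-child and without shortcuts. -/
def NormalNet (D : V → V → Prop) : Prop := TreeChild D ∧ ∀ a b, ¬ IsShortcut D a b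

/-- `D` is a rooted pseudo network with root `ρ` whose set of leaves is `X`
(leaves are labelled by themselves). -/
def IsRootedPseudoNetwork (D : V → V → Prop) (ρ : V) (X : Set V) : Prop :=
  Acyclic D ∧ (∀ v, ¬ D v v) ∧
  inDeg D ρ = 0 ∧ 1 ≤ outDeg D ρ ∧
  (∀ v, inDeg D v = 0 → v = ρ) ∧
  (∀ v, outDeg D v = 0 → inDeg D v = 1) ∧
  {v | outDeg D v = 0} = X ∧
  (∀ v, v ≠ ρ → outDeg D v ≠ 0 → 1 ≤ inDeg D v ∧ 1 ≤ outDeg D v)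

/-- `D` is a rooted phylogenetic network with root `ρ` and leaf set `X`:
additionally every internal vertex has in-degree 1 and out-degree ≥ 2, or
in-degree ≥ 2 and out-degree ≥ 1. -/
def IsRootedPhyloNetwork (D : V → V → Prop) (ρ : V) (X : Set V) : Prop :=
  Acyclic D ∧ (∀ v, ¬ D v v) ∧
  inDeg D ρ = 0 ∧ 1 ≤ outDeg D ρ ∧
  (∀ v, inDeg D v = 0 → v = ρ) ∧
  (∀ v, outDeg D v = 0 → inDeg D v = 1) ∧
  {v | outDeg D v = 0} = X ∧
  (∀ v, v ≠ ρ → outDeg D v ≠ 0 →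
    (inDeg D v = 1 ∧ 2 ≤ outDeg D v) ∨ (2 ≤ inDeg D v ∧ 1 ≤ outDeg D v))

/-- `{u,w} = {a,b}` as unordered pairs. -/
def SamePair (u w a b : V) : Prop := (u = a ∧ w = b) ∨ (u = b ∧ w = a)

/-- A Variant-A orientation of the undirected graph `adj` obtained by
subdividing the edge `{a,b}` with a new root vertex `none` and directing all
edges; `D` is the resulting arc relation on `Option V` (the root is `none`). -/
def VariantA (adj : V → V → Prop) (a b : V) (D : Option V → Option V → Prop) : Prop :=
  adj a b ∧
  D none (some a) ∧ D none (some b) ∧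
  (∀ o, ¬ D o none) ∧
  (∀ u, D none (some u) → u = a ∨ u = b) ∧
  (∀ u w : V, D (some u) (some w) → adj u w ∧ ¬ SamePair u w a b) ∧
  (∀ u w : V, adj u w → ¬ SamePair u w a b → (D (some u) (some w) ↔ ¬ D (some w) (some u)))

/-- `D` assigns to each edge of `adj` exactly one direction (used for
Variant-B orientations and for orientations of connector networks). -/
def IsOrientation (adj D : V → V → Prop) : Prop :=
  (∀ a b, D a b → adj a b) ∧ (∀ a b, adj a b → (D a b ↔ ¬ D b a))

/-- An orientation of a connector network with labelled leaves `L` and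
connector leaves `Uc` that is acyclic, in which every labelled leaf has
out-degree 0 and every vertex not in `L ∪ Uc` has in-degree ≥ 1 and
out-degree ≥ 1 (the standing hypotheses for the compatibility notions). -/
def GoodOrientation (adj D : V → V → Prop) (L Uc : Set V) : Prop :=
  IsOrientation adj D ∧ Acyclic D ∧ (∀ v ∈ L, outDeg D v = 0) ∧
  (∀ v, v ∉ L ∪ Uc → 1 ≤ inDeg D v ∧ 1 ≤ outDeg D v)

/-- F-compatible: every vertex of in-degree at least 2 has out-degree 1. -/
def FCompatible (D : V → V → Prop) : Prop := ∀ v, 2 ≤ inDeg D v → outDeg D v = 1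

/-- TC-compatible orientation of a connector network. -/
def TCCompatible (D : V → V → Prop) (L Uc : Set V) : Prop :=
  ∀ v, v ∉ L ∪ Uc → ∃ u, D v u ∧ (u ∈ L ∪ Uc ∨ (inDeg D u = 1 ∧ 1 ≤ outDeg D u))

/-- Strongly TC-compatible orientation of a connector network. -/
def StrongTCCompatible (D : V → V → Prop) (L Uc : Set V) : Prop :=
  ∀ v, v ∉ L ∪ Uc → ∃ u, D v u ∧ (u ∈ L ∨ (inDeg D u = 1 ∧ 1 ≤ outDeg D u))

end Prelude

namespace PaperFormalization

/-- Vertices of the caterpillar gadget with `n` internal degree-5 vertices: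
`p i` (for `i : Fin n`, with `p ⟨0,_⟩` playing the role of `p_1` and
`p ⟨n-1,_⟩` the role of `p_n`), connector leaves `r` and `x i`, and labelled
leaves `lf` (pendant at `p_1`) and `li i`, `li' i` (pendant at `p i`). -/
inductive CatV (n : ℕ) : Type
  | p (i : Fin n) | x (i : Fin n) | r | lf | li (i : Fin n) | li' (i : Fin n)

/-- The edges of the caterpillar gadget (one fixed orientation of each edge). -/
def catBase {n : ℕ} : CatV n → CatV n → Prop
  | .p i, .p j => (i : ℕ) + 1 = (j : ℕ)
  | .p i, .r => (i : ℕ) = n - 1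
  | .p i, .x j => i = j
  | .p i, .li j => i = j
  | .p i, .li' j => i = j
  | .p i, .lf => (i : ℕ) = 0
  | _, _ => False

/-- Adjacency relation of the caterpillar gadget. -/
def catAdj {n : ℕ} (a b : CatV n) : Prop := catBase a b ∨ catBase b a

/-- Labelled leaves of the caterpillar gadget. -/
def catL (n : ℕ) : Set (CatV n) :=
  {v | match v with
    | .lf => True
    | .li _ => True
    | .li' _ => True
    | _ => False}

/-- Connector leaves of the caterpillar gadget. -/
def catU (n : ℕ) : Set (CatV n) :=
  {v | match v with
    | .r => True
    | .x _ => True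
    | _ => False}

end PaperFormalization

namespace PaperFormalization

instance catFinite (n : ℕ) : Finite (CatV n) := by
  apply Finite.of_injective (fun v : CatV n =>
    (match v with
      | .p i => Sum.inl i
      | .x i => Sum.inr (Sum.inl i)
      | .r => Sum.inr (Sum.inr (Sum.inr (Sum.inr true)))
      | .lf => Sum.inr (Sum.inr (Sum.inr (Sum.inr false)))
      | .li i => Sum.inr (Sum.inr (Sum.inl i))
      | .li' i => Sum.inr (Sum.inr (Sum.inr (Sum.inl i)))
      : Fin n ⊕ Fin n ⊕ Fin n ⊕ Fin n ⊕ Bool))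
  intro a b h
  cases a <;> cases b <;> simp_all

lemma two_le_inDeg {n : ℕ} {D : CatV n → CatV n → Prop} {v a b : CatV n}
    (hab : a ≠ b) (ha : D a v) (hb : D b v) : 2 ≤ inDeg D v := by
  have hsub : ({a, b} : Set (CatV n)) ⊆ {u | D u v} := by
    rintro u (rfl | rfl) <;> assumption
  calc 2 = ({a, b} : Set (CatV n)).ncard := (Set.ncard_pair hab).symm
    _ ≤ _ := Set.ncard_le_ncard hsub (Set.toFinite _)

lemma two_le_outDeg {n : ℕ} {D : CatV n → CatV n → Prop} {v a b : CatV n}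
    (hab : a ≠ b) (ha : D v a) (hb : D v b) : 2 ≤ outDeg D v := by
  have hsub : ({a, b} : Set (CatV n)) ⊆ {u | D v u} := by
    rintro u (rfl | rfl) <;> assumption
  calc 2 = ({a, b} : Set (CatV n)).ncard := (Set.ncard_pair hab).symm
    _ ≤ _ := Set.ncard_le_ncard hsub (Set.toFinite _)

/-- Lemma `caterpillar_gadget`(i)-(ii): for `n ≥ 1`, the
(unique) F-compatible orientation `D` of the caterpillar gadget containing the
arc `(r, p_n)` is strongly TC-compatible and contains the arc `(p_i, x_i)` for
every `1 ≤ i ≤ n`. -/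
theorem caterpillar_F_compatible_orientation_properties
    (n : ℕ) (hn : 1 ≤ n) (D : CatV n → CatV n → Prop)
    (hgood : GoodOrientation catAdj D (catL n) (catU n))
    (hF : FCompatible D)
    (hr : D CatV.r (CatV.p ⟨n - 1, by omega⟩)) :
    StrongTCCompatible D (catL n) (catU n) ∧
    ∀ i : Fin n, D (CatV.p i) (CatV.x i) := by
  obtain ⟨⟨hDadj, hor⟩, hacyc, hLsink, hint⟩ := hgood
  -- labelled leaves never have outgoing arcs
  have hsink : ∀ v ∈ catL n, ∀ w, ¬ D v w := by
    intro v hv w hw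
    have h0 := hLsink v hv
    have : ({u | D v u} : Set (CatV n)) = ∅ :=
      (Set.ncard_eq_zero (Set.toFinite _)).mp h0
    exact absurd hw (by simpa using Set.eq_empty_iff_forall_notMem.mp this w)
  -- arcs into the pendant labelled leaves at each p i
  have hli : ∀ i : Fin n, D (CatV.p i) (CatV.li i) := by
    intro i
    have hadj : catAdj (CatV.p i) (CatV.li i) := Or.inl rfl
    have := (hor _ _ hadj).mpr (hsink (CatV.li i) trivial (CatV.p i))
    exact this
  have hli' : ∀ i : Fin n, D (CatV.p i) (CatV.li' i) := by
    intro i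
    have hadj : catAdj (CatV.p i) (CatV.li' i) := Or.inl rfl
    exact (hor _ _ hadj).mpr (hsink (CatV.li' i) trivial (CatV.p i))
  have hout2 : ∀ i : Fin n, 2 ≤ outDeg D (CatV.p i) := by
    intro i
    exact two_le_outDeg (by simp) (hli i) (hli' i)
  -- key step: if p i already has an in-arc from u, every other neighbour w gets an arc from p i
  have stepA : ∀ (i : Fin n) (u w : CatV n), D u (CatV.p i) → u ≠ w →
      catAdj w (CatV.p i) → D (CatV.p i) w := by
    intro i u w hu huw hadj
    by_contra hnd
    have hwv : D w (CatV.p i) := by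
      by_contra hwn
      exact hnd ((hor _ _ (hadj.symm.imp id id : catAdj (CatV.p i) w)).mpr hwn)
    have h2 : 2 ≤ inDeg D (CatV.p i) := two_le_inDeg huw hu hwv
    have := hF _ h2
    have := hout2 i
    omega
  -- downward induction along the spine
  have main : ∀ m j : ℕ, ∀ hj : j < n, j + m = n - 1 →
      ∃ u, D u (CatV.p ⟨j, hj⟩) ∧
        (u = CatV.r ∨ ∃ hj1 : j + 1 < n, u = CatV.p ⟨j + 1, hj1⟩) := by
    intro m
    induction m with
    | zero =>
      intro j hj hjm
      have : j = n - 1 := by omega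
      subst this
      exact ⟨CatV.r, hr, Or.inl rfl⟩
    | succ m ih =>
      intro j hj hjm
      have hj1 : j + 1 < n := by omega
      obtain ⟨u, hu, hcase⟩ := ih (j + 1) hj1 (by omega)
      have huw : u ≠ CatV.p ⟨j, hj⟩ := by
        rcases hcase with rfl | ⟨h2, rfl⟩
        · simp
        · simp only [ne_eq, CatV.p.injEq, Fin.mk.injEq]; omega
      have hadj : catAdj (CatV.p ⟨j, hj⟩) (CatV.p ⟨j + 1, hj1⟩) := Or.inl rfl
      exact ⟨CatV.p ⟨j + 1, hj1⟩, stepA _ u _ hu huw hadj, Or.inr ⟨hj1, rfl⟩⟩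
  have hx : ∀ i : Fin n, D (CatV.p i) (CatV.x i) := by
    intro i
    obtain ⟨u, hu, hcase⟩ := main (n - 1 - i.val) i.val i.isLt (by omega)
    have hu' : D u (CatV.p i) := by simpa using hu
    have hune : u ≠ CatV.x i := by
      rcases hcase with rfl | ⟨h2, rfl⟩ <;> simp
    have hadj : catAdj (CatV.x i) (CatV.p i) := Or.inr rfl
    exact stepA i u _ hu' hune hadj
  refine ⟨?_, hx⟩
  intro v hv
  match v with
  | .p i => exact ⟨CatV.li i, hli i, Or.inl trivial⟩
  | .x i => exact absurd (Or.inr trivial) hv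
  | .r => exact absurd (Or.inr trivial) hv
  | .lf => exact absurd (Or.inl trivial) hv
  | .li i => exact absurd (Or.inl trivial) hv
  | .li' i => exact absurd (Or.inl trivial) hv

end PaperFormalization
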